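/- arXiv:2503.09042 — 8 statements merged into one kernel-verified Lean document; each statement's English description precedes it below -/
import Mathlib

section
/- For independent uniform X, Y in {-1,1}^n and functions f, g : {-1,1}^n → {1,...,n}, define F_{ij} = E[Y_i · 1{f(Y)=j}] and G_{ij} = E[X_i · 1{g(X)=j}]. Then E[X_{f(Y)} · Y_{g(X)}] = Σ_{i,j=1}^n F_{ij} G_{ji}. -/
open Finset Real
open scoped Classical

/-- The real value of a coordinate: `true ↦ 1`, `false ↦ -1`, encoding `{-1,1}`. -/
noncomputable def chi (b : Bool) : ℝ := if b then 1 else -1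

/-- Expectation with respect to the uniform measure on `{-1,1}^n`. -/
noncomputable def Ex (n : ℕ) (φ : (Fin n → Bool) → ℝ) : ℝ :=
  (∑ x : Fin n → Bool, φ x) / 2 ^ n

/-- Probability with respect to the uniform measure on `{-1,1}^n`. -/
noncomputable def Pr (n : ℕ) (p : (Fin n → Bool) → Prop) : ℝ :=
  Ex n (fun x => if p x then 1 else 0)

/-- Expectation for two independent uniform vectors on `{-1,1}^n`. -/
noncomputable def Ex2 (n : ℕ) (φ : (Fin n → Bool) → (Fin n → Bool) → ℝ) : ℝ :=
  (∑ x : Fin n → Bool, ∑ y : Fin n → Bool, φ x y) / 2 ^ (2 * n)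

/-- Probability for two independent uniform vectors on `{-1,1}^n`. -/
noncomputable def Pr2 (n : ℕ) (p : (Fin n → Bool) → (Fin n → Bool) → Prop) : ℝ :=
  Ex2 n (fun x y => if p x y then 1 else 0)

/-- Fourier coefficient `ĥ(S) = E[h(X)·∏_{i∈S} X_i]`. -/
noncomputable def coeff (n : ℕ) (h : (Fin n → Bool) → ℝ) (S : Finset (Fin n)) : ℝ :=
  Ex n (fun x => h x * ∏ i ∈ S, chi (x i))

/-- Pointwise negation `x ↦ -x` on `{-1,1}^n`. -/
def neg (n : ℕ) (x : Fin n → Bool) : Fin n → Bool := fun i => !(x i)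

lemma sum4_comm {α β γ δ M : Type*} [Fintype α] [Fintype β] [Fintype γ] [Fintype δ]
    [AddCommMonoid M] (T : α → β → γ → δ → M) :
    ∑ x : α, ∑ y : β, ∑ i : γ, ∑ j : δ, T x y i j
      = ∑ i : γ, ∑ j : δ, ∑ y : β, ∑ x : α, T x y i j :=
  calc ∑ x : α, ∑ y : β, ∑ i : γ, ∑ j : δ, T x y i j
      = ∑ x : α, ∑ i : γ, ∑ y : β, ∑ j : δ, T x y i j :=
        Finset.sum_congr rfl fun x _ => Finset.sum_comm ..
    _ = ∑ i : γ, ∑ x : α, ∑ y : β, ∑ j : δ, T x y i j := Finset.sum_comm ..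
    _ = ∑ i : γ, ∑ x : α, ∑ j : δ, ∑ y : β, T x y i j :=
        Finset.sum_congr rfl fun i _ => Finset.sum_congr rfl fun x _ => Finset.sum_comm ..
    _ = ∑ i : γ, ∑ j : δ, ∑ x : α, ∑ y : β, T x y i j :=
        Finset.sum_congr rfl fun i _ => Finset.sum_comm ..
    _ = ∑ i : γ, ∑ j : δ, ∑ y : β, ∑ x : α, T x y i j :=
        Finset.sum_congr rfl fun i _ => Finset.sum_congr rfl fun j _ => Finset.sum_comm ..

/-- E[X_{f(Y)}·Y_{g(X)}] = Σ_{i,j} F_{ij} G_{ji}. -/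
theorem stmt1 (n : ℕ) (f g : (Fin n → Bool) → Fin n)
    (F G : Fin n → Fin n → ℝ)
    (hF : ∀ i j, F i j = Ex n (fun y => chi (y i) * (if f y = j then 1 else 0)))
    (hG : ∀ i j, G i j = Ex n (fun x => chi (x i) * (if g x = j then 1 else 0))) :
    Ex2 n (fun x y => chi (x (f y)) * chi (y (g x))) =
      ∑ i : Fin n, ∑ j : Fin n, F i j * G j i := by
  have pt : ∀ x y : Fin n → Bool, chi (x (f y)) * chi (y (g x)) =
      ∑ i : Fin n, ∑ j : Fin n,
        (chi (y i) * (if f y = j then 1 else 0)) *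
        (chi (x j) * (if g x = i then 1 else 0)) := by
    intro x y
    simp only [mul_ite, mul_one, mul_zero, ite_mul, zero_mul]
    rw [Finset.sum_comm]
    simp [Finset.sum_ite_eq, mul_comm]
  have key : (∑ x : Fin n → Bool, ∑ y : Fin n → Bool, chi (x (f y)) * chi (y (g x))) =
      ∑ i : Fin n, ∑ j : Fin n,
        (∑ y : Fin n → Bool, chi (y i) * (if f y = j then 1 else 0)) *
        (∑ x : Fin n → Bool, chi (x j) * (if g x = i then 1 else 0)) := by
    have expand : ∀ i j : Fin n,
        (∑ y : Fin n → Bool, chi (y i) * (if f y = j then 1 else 0)) *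
        (∑ x : Fin n → Bool, chi (x j) * (if g x = i then 1 else 0)) =
        ∑ y : Fin n → Bool, ∑ x : Fin n → Bool,
          (chi (y i) * (if f y = j then 1 else 0)) *
          (chi (x j) * (if g x = i then 1 else 0)) := fun i j =>
      Finset.sum_mul_sum _ _ _ _
    simp only [pt, expand]
    exact sum4_comm _
  simp only [Ex2, Ex, hF, hG, key, two_mul, pow_add]
  rw [Finset.sum_div]
  refine Finset.sum_congr rfl fun i _ => ?_
  rw [Finset.sum_div]
  refine Finset.sum_congr rfl fun j _ => ?_
  rw [div_mul_div_comm]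
end

section
/- For functions f, g : {-1,1}^n → {1,...,n}, with F_{ij} = E[Y_i · 1{f(Y)=j}] and G_{ij} = E[X_i · 1{g(X)=j}] (X, Y independent uniform on {-1,1}^n), one has E[X_{f(Y)} · Y_{g(X)}] ≤ sqrt( (Σ_{i,j} F_{ij}²) · (Σ_{i,j} G_{ij}²) ). -/
open Finset Real
open scoped Classical

lemma sum4_comm_s2 {α β γ δ : Type*} [Fintype α] [Fintype β] [Fintype γ] [Fintype δ]
    (t : α → β → γ → δ → ℝ) :
    ∑ a : α, ∑ b : β, ∑ c : γ, ∑ d : δ, t a b c d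
      = ∑ c : γ, ∑ d : δ, ∑ a : α, ∑ b : β, t a b c d := by
  have h1 : ∀ a : α, (∑ b : β, ∑ c : γ, ∑ d : δ, t a b c d)
      = ∑ c : γ, ∑ d : δ, ∑ b : β, t a b c d := by
    intro a
    rw [Finset.sum_comm]
    exact Finset.sum_congr rfl fun c _ => Finset.sum_comm
  simp only [h1]
  rw [Finset.sum_comm]
  exact Finset.sum_congr rfl fun c _ => Finset.sum_comm

/-- E[X_{f(Y)}·Y_{g(X)}] ≤ sqrt((Σ F²)(Σ G²)). -/
theorem stmt2 (n : ℕ) (f g : (Fin n → Bool) → Fin n)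
    (F G : Fin n → Fin n → ℝ)
    (hF : ∀ i j, F i j = Ex n (fun y => chi (y i) * (if f y = j then 1 else 0)))
    (hG : ∀ i j, G i j = Ex n (fun x => chi (x i) * (if g x = j then 1 else 0))) :
    Ex2 n (fun x y => chi (x (f y)) * chi (y (g x))) ≤
      Real.sqrt ((∑ i : Fin n, ∑ j : Fin n, (F i j) ^ 2) *
        (∑ i : Fin n, ∑ j : Fin n, (G i j) ^ 2)) := by
  have hxy : ∀ x y : Fin n → Bool, chi (x (f y)) * chi (y (g x)) =
      ∑ i : Fin n, ∑ j : Fin n,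
        (chi (y i) * (if f y = j then 1 else 0)) * (chi (x j) * (if g x = i then 1 else 0)) := by
    intro x y
    simp [mul_ite, ite_mul, mul_one, one_mul, mul_zero, zero_mul,
      Finset.sum_ite_eq, Finset.sum_ite_eq', mul_comm]
  have key : Ex2 n (fun x y => chi (x (f y)) * chi (y (g x)))
      = ∑ i : Fin n, ∑ j : Fin n, F i j * G j i := by
    simp only [Ex2, hF, hG, Ex, hxy]
    rw [sum4_comm_s2]
    rw [show (2:ℝ)^(2*n) = 2^n * 2^n from by rw [two_mul, pow_add]]
    simp only [div_mul_div_comm, ← Finset.sum_div]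
    congr 1
    apply Finset.sum_congr rfl; intro i _
    apply Finset.sum_congr rfl; intro j _
    rw [Finset.sum_mul_sum, Finset.sum_comm]
  rw [key]
  set S := ∑ i : Fin n, ∑ j : Fin n, F i j * G j i with hS
  have hCS : S ^ 2 ≤ (∑ i : Fin n, ∑ j : Fin n, (F i j) ^ 2) *
      (∑ i : Fin n, ∑ j : Fin n, (G i j) ^ 2) := by
    have h := Finset.sum_mul_sq_le_sq_mul_sq Finset.univ
      (fun p : Fin n × Fin n => F p.1 p.2) (fun p : Fin n × Fin n => G p.2 p.1)
    have e1 : ∑ p : Fin n × Fin n, F p.1 p.2 * G p.2 p.1 = S := by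
      rw [hS, Fintype.sum_prod_type]
    have e2 : ∑ p : Fin n × Fin n, (F p.1 p.2) ^ 2
        = ∑ i : Fin n, ∑ j : Fin n, (F i j) ^ 2 := by
      rw [Fintype.sum_prod_type]
    have e3 : ∑ p : Fin n × Fin n, (G p.2 p.1) ^ 2
        = ∑ i : Fin n, ∑ j : Fin n, (G i j) ^ 2 := by
      rw [Fintype.sum_prod_type, Finset.sum_comm]
    rw [e1, e2, e3] at h
    exact h
  calc S ≤ |S| := le_abs_self S
    _ = Real.sqrt (S ^ 2) := (Real.sqrt_sq_eq_abs S).symm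
    _ ≤ _ := Real.sqrt_le_sqrt hCS
end

section
/- Let h : {-1,1}^n → {0,1} and α = Pr[h(X)=1] for X uniform on {-1,1}^n. Then the sum over all odd-size sets S ⊆ [n] of ĥ(S)² is at most α/2. -/
open Finset Real
open scoped Classical

lemma sum_prod_eq (n : ℕ) (f : Fin n → ℝ) :
    ∑ S : Finset (Fin n), ∏ i ∈ S, f i = ∏ i, (f i + 1) := by
  rw [Finset.prod_add, ← Finset.powerset_univ]
  exact Finset.sum_congr rfl fun S _ => by simp

lemma prod_eval (n : ℕ) (ε : ℝ) (hε : ε = 1 ∨ ε = -1) (x y : Fin n → Bool) :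
    ∏ i, (ε * (chi (x i) * chi (y i)) + 1)
      = if (∀ i, ε * (chi (x i) * chi (y i)) = 1) then (2:ℝ)^n else 0 := by
  split_ifs with hc
  · calc ∏ i, (ε * (chi (x i) * chi (y i)) + 1) = ∏ i : Fin n, (2:ℝ) := by
          exact Finset.prod_congr rfl fun i _ => by rw [hc i]; norm_num
      _ = 2^n := by simp
  · push_neg at hc
    obtain ⟨i, hi⟩ := hc
    apply Finset.prod_eq_zero (Finset.mem_univ i)
    have : ε * (chi (x i) * chi (y i)) = -1 := by
      rcases hε with rfl | rfl <;> cases hxi : x i <;> cases hyi : y i <;>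
        simp_all [chi]
    rw [this]; ring

lemma chi_mul_eq_one {a b : Bool} : chi a * chi b = 1 ↔ a = b := by
  cases a <;> cases b <;> norm_num [chi]

lemma chi_mul_eq_neg_one {a b : Bool} : chi a * chi b = -1 ↔ a = !b := by
  cases a <;> cases b <;> norm_num [chi]

lemma core (n : ℕ) (h : (Fin n → Bool) → ℝ) (ε : ℝ) :
    ∑ S : Finset (Fin n), ε ^ S.card * (coeff n h S)^2
      = (∑ x : Fin n → Bool, ∑ y : Fin n → Bool,
          h x * h y * ∏ i, (ε * (chi (x i) * chi (y i)) + 1)) / 2 ^ (2*n) := by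
  have step : ∀ S : Finset (Fin n), ε ^ S.card * (coeff n h S)^2
      = (∑ x : Fin n → Bool, ∑ y : Fin n → Bool,
          h x * h y * ∏ i ∈ S, (ε * (chi (x i) * chi (y i)))) / 2 ^ (2*n) := by
    intro S
    rw [coeff, Ex, div_pow, ← pow_mul, mul_comm n 2, mul_comm (ε ^ S.card), div_mul_eq_mul_div]
    congr 1
    rw [sq, Finset.sum_mul_sum, Finset.sum_mul]
    refine Finset.sum_congr rfl fun x _ => ?_
    rw [Finset.sum_mul]
    refine Finset.sum_congr rfl fun y _ => ?_
    have : ∏ i ∈ S, (ε * (chi (x i) * chi (y i)))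
        = (∏ i ∈ S, ε) * ((∏ i ∈ S, chi (x i)) * ∏ i ∈ S, chi (y i)) := by
      rw [← Finset.prod_mul_distrib, ← Finset.prod_mul_distrib]
    rw [this, Finset.prod_const]
    ring
  rw [Finset.sum_congr rfl fun S _ => step S, ← Finset.sum_div]
  congr 1
  rw [Finset.sum_comm]
  refine Finset.sum_congr rfl fun x _ => ?_
  rw [Finset.sum_comm]
  refine Finset.sum_congr rfl fun y _ => ?_
  rw [← Finset.mul_sum, sum_prod_eq]

lemma key_eval (n : ℕ) (h : (Fin n → Bool) → ℝ) (g : (Fin n → Bool) → (Fin n → Bool))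
    (ε : ℝ) (hε : ε = 1 ∨ ε = -1)
    (hg : ∀ x y : Fin n → Bool, (∀ i, ε * (chi (x i) * chi (y i)) = 1) ↔ y = g x) :
    ∑ S : Finset (Fin n), ε ^ S.card * (coeff n h S)^2
      = (∑ x : Fin n → Bool, h x * h (g x)) / 2 ^ n := by
  rw [core n h ε]
  have : ∀ x : Fin n → Bool, ∑ y : Fin n → Bool,
      h x * h y * ∏ i, (ε * (chi (x i) * chi (y i)) + 1) = h x * h (g x) * 2 ^ n := by
    intro x
    have : ∀ y : Fin n → Bool, h x * h y * ∏ i, (ε * (chi (x i) * chi (y i)) + 1)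
        = if y = g x then h x * h y * 2 ^ n else 0 := by
      intro y
      rw [prod_eval n ε hε x y]
      simp only [hg x y]
      split_ifs <;> ring
    rw [Finset.sum_congr rfl fun y _ => this y, Finset.sum_ite_eq' Finset.univ (g x)]
    simp
  rw [Finset.sum_congr rfl fun x _ => this x, ← Finset.sum_mul, two_mul, pow_add]
  have h2n : (2:ℝ)^n ≠ 0 := by positivity
  field_simp

/-- for h : {-1,1}^n → {0,1}, Σ_{|S| odd} ĥ(S)² ≤ α/2. -/
theorem stmt5 (n : ℕ) (h : (Fin n → Bool) → ℝ)
    (hval : ∀ x, h x = 0 ∨ h x = 1) (α : ℝ)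
    (hα : α = Pr n (fun x => h x = 1)) :
    ∑ S ∈ Finset.univ.filter (fun S : Finset (Fin n) => Odd S.card),
      (coeff n h S) ^ 2 ≤ α / 2 := by
  have hge : ∀ x, 0 ≤ h x := fun x => by rcases hval x with h0 | h0 <;> simp [h0]
  -- Parseval : ε = 1, g = id
  have key1 : ∑ S : Finset (Fin n), (coeff n h S)^2 = (∑ x : Fin n → Bool, h x * h x) / 2 ^ n := by
    have := key_eval n h id 1 (Or.inl rfl) ?_
    · simpa using this
    · intro x y
      constructor
      · intro hc
        funext i
        exact (chi_mul_eq_one.mp (by simpa using hc i)).symm ▸ rfl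
      · intro hyx
        subst hyx
        intro i
        rw [one_mul, chi_mul_eq_one]
  -- signed sum : ε = -1, g = neg n
  have key2 : ∑ S : Finset (Fin n), (-1:ℝ) ^ S.card * (coeff n h S)^2
      = (∑ x : Fin n → Bool, h x * h (neg n x)) / 2 ^ n := by
    apply key_eval n h (neg n) (-1) (Or.inr rfl)
    intro x y
    constructor
    · intro hc
      funext i
      have hi : chi (x i) * chi (y i) = -1 := by have := hc i; linarith
      have h2 := chi_mul_eq_neg_one.mp hi
      show y i = neg n x i
      cases hyi : y i <;> cases hxi : x i <;> simp_all [neg]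
    · intro hyx
      subst hyx
      intro i
      cases hx : x i <;> simp [chi, neg, hx]
  have key2nn : 0 ≤ ∑ S : Finset (Fin n), (-1:ℝ) ^ S.card * (coeff n h S)^2 := by
    rw [key2]
    apply div_nonneg _ (by positivity)
    exact Finset.sum_nonneg fun x _ => mul_nonneg (hge x) (hge (neg n x))
  have hαeq : α = (∑ x : Fin n → Bool, h x * h x) / 2 ^ n := by
    rw [hα, Pr, Ex]
    congr 1
    refine Finset.sum_congr rfl fun x _ => ?_
    rcases hval x with h0 | h0 <;> simp [h0]
  have split : ∑ S ∈ Finset.univ.filter (fun S : Finset (Fin n) => Odd S.card),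
      (coeff n h S) ^ 2
      = ((∑ S : Finset (Fin n), (coeff n h S)^2)
        - ∑ S : Finset (Fin n), (-1:ℝ) ^ S.card * (coeff n h S)^2) / 2 := by
    rw [← Finset.sum_sub_distrib, Finset.sum_div, Finset.sum_filter]
    refine Finset.sum_congr rfl fun S _ => ?_
    by_cases hS : Odd S.card
    · rw [if_pos hS, hS.neg_one_pow]; ring
    · rw [if_neg hS, (Nat.not_odd_iff_even.mp hS).neg_one_pow]; ring
  rw [split, hαeq, ← key1]
  linarith
end

section
/- (Chang's inequality) Let h : {-1,1}^n → {0,1} and α = Pr[h(X)=1] with 0 < α ≤ 1. Then Σ_{k=1}^n ĥ({k})² ≤ 2α² log(1/α), where log is the natural logarithm. -/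
open Finset Real
open scoped Classical

/-!
Let `L(x) = ∑ₖ ĥ({k}) xₖ`, so that `E[h·L] = ∑ₖ ĥ({k})²`. For `0 ≤ h ≤ 1` with mean `α`, the
entropy (Gibbs) inequality gives `E[h·Y] ≤ α log (E[e^Y] / α)`, and for `Y = t·L` the
moment generating function factors as `∏ₖ cosh (t ĥ({k})) ≤ exp (t² ∑ₖ ĥ({k})² / 2)`.
Taking `t = 1/α` yields Chang's inequality.
-/

lemma Ex_add {n : ℕ} (f g : (Fin n → Bool) → ℝ) :
    Ex n (fun x => f x + g x) = Ex n f + Ex n g := by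
  unfold Ex; rw [sum_add_distrib, add_div]

lemma Ex_const_mul {n : ℕ} (c : ℝ) (f : (Fin n → Bool) → ℝ) :
    Ex n (fun x => c * f x) = c * Ex n f := by
  unfold Ex; rw [← mul_sum, mul_div_assoc]

lemma Ex_sum {n : ℕ} (f : Fin n → (Fin n → Bool) → ℝ) :
    Ex n (fun x => ∑ k, f k x) = ∑ k, Ex n (f k) := by
  unfold Ex; rw [sum_comm, ← sum_div]

lemma Ex_mono {n : ℕ} {f g : (Fin n → Bool) → ℝ} (hfg : ∀ x, f x ≤ g x) :
    Ex n f ≤ Ex n g := by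
  unfold Ex; gcongr with x; exact hfg x

lemma Ex_pos {n : ℕ} {f : (Fin n → Bool) → ℝ} (hf : ∀ x, 0 < f x) : 0 < Ex n f := by
  unfold Ex
  exact div_pos (sum_pos (fun x _ => hf x) univ_nonempty) (by positivity)

lemma Ex_prod_apply {n : ℕ} (g : Fin n → Bool → ℝ) :
    Ex n (fun x => ∏ k, g k (x k)) = ∏ k, (g k true + g k false) / 2 := by
  unfold Ex
  rw [← Fintype.piFinset_univ, ← prod_univ_sum, prod_div_distrib, prod_const, card_univ,
    Fintype.card_fin]
  simp

lemma mul_le_mul_sub_one_add_exp_sub {a y c : ℝ} (ha₀ : 0 ≤ a) (ha₁ : a ≤ 1) :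
    a * y ≤ a * (c - 1) + exp (y - c) := by
  nlinarith [add_one_le_exp (y - c), exp_pos (y - c), mul_nonneg ha₀ (sub_nonneg.2 ha₁)]

/-- Gibbs' inequality, the dual form of the nonnegativity of relative entropy. -/
lemma Ex_mul_le_mul_log_Ex_exp {n : ℕ} {h : (Fin n → Bool) → ℝ} (h₀ : ∀ x, 0 ≤ h x)
    (h₁ : ∀ x, h x ≤ 1) (hpos : 0 < Ex n h) (Y : (Fin n → Bool) → ℝ) :
    Ex n (fun x => h x * Y x) ≤ Ex n h * log (Ex n (fun x => exp (Y x)) / Ex n h) := by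
  set α := Ex n h
  set M := Ex n (fun x => exp (Y x))
  have hM : 0 < M := Ex_pos fun x => exp_pos (Y x)
  set c := log (M / α)
  have hexp_neg_c : exp (-c) = α / M := by
    rw [exp_neg, exp_log (div_pos hM hpos), inv_div]
  calc Ex n (fun x => h x * Y x)
      ≤ Ex n (fun x => (c - 1) * h x + exp (-c) * exp (Y x)) := Ex_mono fun x => by
        rw [← exp_add, neg_add_eq_sub, mul_comm (c - 1)]
        exact mul_le_mul_sub_one_add_exp_sub (h₀ x) (h₁ x)
    _ = α * c := by
        rw [Ex_add, Ex_const_mul, Ex_const_mul, hexp_neg_c, div_mul_cancel₀ _ hM.ne']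
        ring

lemma Ex_exp_sum_mul_chi (n : ℕ) (a : Fin n → ℝ) :
    Ex n (fun x => exp (∑ k, a k * chi (x k))) = ∏ k, cosh (a k) := by
  simp_rw [exp_sum]
  rw [Ex_prod_apply fun k b => exp (a k * chi b)]
  simp [chi, cosh_eq]

lemma Ex_exp_sum_mul_chi_le (n : ℕ) (a : Fin n → ℝ) :
    Ex n (fun x => exp (∑ k, a k * chi (x k))) ≤ exp ((∑ k, a k ^ 2) / 2) := by
  rw [Ex_exp_sum_mul_chi, sum_div, exp_sum]
  exact prod_le_prod (fun k _ => (cosh_pos _).le) fun k _ => cosh_le_exp_half_sq _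

lemma Ex_mul_sum_mul_chi (n : ℕ) (h : (Fin n → Bool) → ℝ) (a : Fin n → ℝ) :
    Ex n (fun x => h x * ∑ k, a k * chi (x k)) = ∑ k, a k * coeff n h {k} := by
  simp_rw [mul_sum]
  rw [Ex_sum]
  refine sum_congr rfl fun k _ => ?_
  simp_rw [mul_left_comm (h _) (a k)]
  rw [Ex_const_mul]
  simp [coeff]

lemma mul_sum_coeff_singleton_sq_le {n : ℕ} {h : (Fin n → Bool) → ℝ} (h₀ : ∀ x, 0 ≤ h x)
    (h₁ : ∀ x, h x ≤ 1) (hpos : 0 < Ex n h) (t : ℝ) :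
    t * ∑ k, coeff n h {k} ^ 2 ≤
      Ex n h * (t ^ 2 * (∑ k, coeff n h {k} ^ 2) / 2 + log (1 / Ex n h)) := by
  set α := Ex n h
  set W := ∑ k, coeff n h {k} ^ 2
  set M := Ex n (fun x => exp (∑ k, t * coeff n h {k} * chi (x k)))
  have hcorr : Ex n (fun x => h x * ∑ k, t * coeff n h {k} * chi (x k)) = t * W := by
    rw [Ex_mul_sum_mul_chi, mul_sum]
    exact sum_congr rfl fun k _ => by ring
  have hM : M ≤ exp (t ^ 2 * W / 2) := by
    convert Ex_exp_sum_mul_chi_le n fun k => t * coeff n h {k} using 2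
    simp only [mul_pow, W, mul_sum]
  have hlog : log (M / α) ≤ t ^ 2 * W / 2 + log (1 / α) := by
    calc log (M / α) ≤ log (exp (t ^ 2 * W / 2) / α) :=
          log_le_log (div_pos (Ex_pos fun x => exp_pos _) hpos) (by gcongr)
      _ = t ^ 2 * W / 2 + log (1 / α) := by
          rw [log_div (exp_pos _).ne' hpos.ne', log_exp, one_div, log_inv, sub_eq_add_neg]
  calc t * W = Ex n (fun x => h x * ∑ k, t * coeff n h {k} * chi (x k)) := hcorr.symm
    _ ≤ α * log (M / α) := Ex_mul_le_mul_log_Ex_exp h₀ h₁ hpos _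
    _ ≤ α * (t ^ 2 * W / 2 + log (1 / α)) := by gcongr

theorem stmt7_general (n : ℕ) (h : (Fin n → Bool) → ℝ)
    (hval : ∀ x, h x = 0 ∨ h x = 1) (α : ℝ)
    (hα : α = Pr n (fun x => h x = 1)) (hpos : 0 < α) :
    ∑ k : Fin n, (coeff n h {k}) ^ 2 ≤ 2 * α ^ 2 * Real.log (1 / α) := by
  have hEh : Ex n h = α := by
    rw [hα, Pr]
    congr 1; funext x
    rcases hval x with hx | hx <;> simp [hx]
  have hbounds : ∀ x, 0 ≤ h x ∧ h x ≤ 1 := fun x => by rcases hval x with hx | hx <;> simp [hx]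
  have key := mul_sum_coeff_singleton_sq_le (fun x => (hbounds x).1) (fun x => (hbounds x).2)
    (hEh ▸ hpos) (1 / α)
  rw [hEh] at key
  set W := ∑ k, coeff n h {k} ^ 2
  replace key : W / α ≤ W / (2 * α) + α * log (1 / α) := by
    convert key using 1
    · ring
    · field_simp
  calc W = 2 * α * (W / α - W / (2 * α)) := by field_simp; ring
    _ ≤ 2 * α * (α * log (1 / α)) := by gcongr; linarith
    _ = 2 * α ^ 2 * log (1 / α) := by ring

/-- Chang's inequality: Σ_k ĥ({k})² ≤ 2α² log(1/α). -/
theorem stmt7 (n : ℕ) (h : (Fin n → Bool) → ℝ)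
    (hval : ∀ x, h x = 0 ∨ h x = 1) (α : ℝ)
    (hα : α = Pr n (fun x => h x = 1)) (hpos : 0 < α) (hle : α ≤ 1) :
    ∑ k : Fin n, (coeff n h {k}) ^ 2 ≤ 2 * α ^ 2 * Real.log (1 / α) :=
  stmt7_general n h hval α hα hpos
end

section
/- Let k ≥ 2 and 0 < ε < 1/4. Let f, g : {-1,1}^n → {1,...,n} with Pr[g(X) ≥ k] ≤ ε, where X is uniform on {-1,1}^n. Then for independent uniform X, Y one has E[X_{f(Y)} · Y_{g(X)}] ≤ 1/2 − (1−4ε)·2^{−k+1}. -/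
/-!
Negating `X` negates `X_{f(Y)}` and negating `Y` negates `Y_{g(X)}`, so
`4 E[X_{f(Y)} Y_{g(X)}] = E[(X_{f(Y)} - X_{f(-Y)}) (Y_{g(X)} - Y_{g(-X)})]`, and the integrand is
at most `4·[X_{f(Y)} ≠ X_{f(-Y)}]` and at most `4·[Y_{g(X)} ≠ Y_{g(-X)}]`. Let `S = {1, …, k-1}`.
When `y` is constant on `S`, `y_{g(x)} ≠ y_{g(-x)}` forces `g(x) ∉ S` or `g(-x) ∉ S`, which has
probability at most `2ε`; otherwise `Pr[X_i ≠ X_j] ≤ 1/2` for the fixed indices `i = f(y)`,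
`j = f(-y)`. With `p = Pr[Y constant on S] ≥ 2^{2-k}` this gives
`E[X_{f(Y)} Y_{g(X)}] ≤ (1 - p)/2 + 2εp ≤ 1/2 - (1 - 4ε) 2^{1-k}`.
-/

open Finset Real
open scoped Classical

open scoped BigOperators

section

variable {n : ℕ}

lemma chi_not (b : Bool) : chi (!b) = -chi b := by cases b <;> simp [chi]

lemma cube_neg_involutive (n : ℕ) : Function.Involutive (neg n) :=
  fun x => funext fun i => by simp [neg]

lemma Ex_eq_expect (φ : (Fin n → Bool) → ℝ) : Ex n φ = 𝔼 x, φ x := by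
  simp [Ex, Fintype.expect_eq_sum_div_card]

lemma Pr_eq_expect (p : (Fin n → Bool) → Prop) [DecidablePred p] :
    Pr n p = 𝔼 x, if p x then 1 else 0 := by
  rw [Pr, Ex_eq_expect]
  congr!

lemma Ex2_eq_expect (φ : (Fin n → Bool) → (Fin n → Bool) → ℝ) :
    Ex2 n φ = 𝔼 x, 𝔼 y, φ x y := by
  simp [Ex2, Fintype.expect_eq_sum_div_card, ← Finset.sum_div, div_div, pow_mul', sq]

lemma Pr_eq_card_div (p : (Fin n → Bool) → Prop) [DecidablePred p] :
    Pr n p = #{x | p x} / 2 ^ n := by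
  rw [Pr, Ex]
  congr 1
  convert sum_boole p (univ : Finset (Fin n → Bool))

lemma Pr_mono {p q : (Fin n → Bool) → Prop} (h : ∀ x, p x → q x) : Pr n p ≤ Pr n q := by
  rw [Pr_eq_card_div, Pr_eq_card_div]
  gcongr with x
  exact h x

lemma Pr_or_of_disjoint {p q : (Fin n → Bool) → Prop} (h : ∀ x, p x → ¬q x) :
    Pr n (fun x => p x ∨ q x) = Pr n p + Pr n q := by
  rw [Pr_eq_card_div, Pr_eq_card_div, Pr_eq_card_div, filter_or,
    card_union_of_disjoint (disjoint_filter.2 fun x _ => h x), Nat.cast_add, add_div]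

lemma card_filter_forall_mem_eq (S : Finset (Fin n)) (c : Bool) :
    #{y : Fin n → Bool | ∀ i ∈ S, y i = c} = 2 ^ (n - #S) := by
  have : ({y : Fin n → Bool | ∀ i ∈ S, y i = c} : Finset _) =
      Fintype.piFinset fun i => if i ∈ S then {c} else univ := by
    ext y; simp only [mem_filter, mem_univ, true_and, Fintype.mem_piFinset]
    refine forall_congr' fun i => ?_
    split_ifs <;> simp [*]
  rw [this, Fintype.card_piFinset]
  simp only [apply_ite card, card_singleton, card_univ, Fintype.card_bool]
  rw [prod_ite, prod_const_one, one_mul, prod_const]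
  rw [← show #Sᶜ = n - #S by simp [card_compl]]
  congr
  ext
  simp

lemma Pr_forall_mem_eq (S : Finset (Fin n)) (c : Bool) :
    Pr n (fun y => ∀ i ∈ S, y i = c) = 2 ^ (-(#S : ℤ)) := by
  have hS : #S ≤ n := by simpa using card_le_univ S
  rw [Pr_eq_card_div, card_filter_forall_mem_eq, Nat.cast_pow, Nat.cast_ofNat,
    ← zpow_natCast, ← zpow_natCast, ← zpow_sub₀ two_ne_zero, Nat.cast_sub hS]
  ring_nf

lemma zpow_one_sub_card_le_Pr_const (S : Finset (Fin n)) (hS : S.Nonempty) :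
    (2 : ℝ) ^ (1 - (#S : ℤ)) ≤ Pr n (fun y => ∀ i ∈ S, ∀ j ∈ S, y i = y j) := by
  obtain ⟨i₀, hi₀⟩ := hS
  calc (2 : ℝ) ^ (1 - (#S : ℤ))
      = Pr n (fun y => ∀ i ∈ S, y i = true) + Pr n (fun y => ∀ i ∈ S, y i = false) := by
        rw [Pr_forall_mem_eq, Pr_forall_mem_eq, sub_eq_neg_add, zpow_add₀ two_ne_zero]
        ring
    _ = Pr n (fun y => (∀ i ∈ S, y i = true) ∨ ∀ i ∈ S, y i = false) :=
        (Pr_or_of_disjoint fun y ht hf => by simpa [ht i₀ hi₀] using hf i₀ hi₀).symm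
    _ ≤ _ := Pr_mono fun y hy i hi j hj => by rcases hy with h | h <;> rw [h i hi, h j hj]

lemma expect_comp_neg (φ : (Fin n → Bool) → ℝ) : 𝔼 x, φ (neg n x) = 𝔼 x, φ x :=
  Fintype.expect_equiv (cube_neg_involutive n).toPerm _ _ fun _ => rfl

lemma expect_symmetrize (a b : (Fin n → Bool) → (Fin n → Bool) → ℝ)
    (ha : ∀ x y, a (neg n x) y = -a x y) (hb : ∀ x y, b x (neg n y) = -b x y) :
    𝔼 x, 𝔼 y, (a x y - a x (neg n y)) * (b x y - b (neg n x) y) =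
      4 * 𝔼 x, 𝔼 y, a x y * b x y := by
  have hy : 𝔼 x, 𝔼 y, a x (neg n y) * b x y = -𝔼 x, 𝔼 y, a x y * b x y := by
    simp_rw [← expect_neg_distrib, ← expect_comp_neg (fun y => a _ (neg n y) * b _ y),
      cube_neg_involutive n _, hb, mul_neg]
  have hx : 𝔼 x, 𝔼 y, a x y * b (neg n x) y = -𝔼 x, 𝔼 y, a x y * b x y := by
    rw [← expect_comp_neg]
    simp_rw [← expect_neg_distrib, cube_neg_involutive n _, ha, neg_mul]
  have hxy : 𝔼 x, 𝔼 y, a x (neg n y) * b (neg n x) y = 𝔼 x, 𝔼 y, a x y * b x y := by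
    rw [← expect_comp_neg]
    simp_rw [← expect_comp_neg (fun y => a (neg n _) (neg n y) * _), cube_neg_involutive n _,
      ha, hb, neg_mul_neg]
  simp_rw [sub_mul, mul_sub, expect_sub_distrib, hy, hx, hxy]
  ring

lemma chi_sub_mul_chi_sub_le (a a' b b' : Bool) :
    (chi a - chi a') * (chi b - chi b') ≤ 4 * if a = a' then 0 else 1 := by
  cases a <;> cases a' <;> cases b <;> cases b' <;> norm_num [chi]

lemma expect_coord_ne_le_half (i j : Fin n) :
    𝔼 x : Fin n → Bool, (if x i = x j then 0 else 1 : ℝ) ≤ 1 / 2 := by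
  set φ : (Fin n → Bool) → ℝ := fun x => if x i = x j then 0 else 1
  have flip : Function.Involutive fun x : Fin n → Bool => Function.update x i (!x i) := by
    intro x
    simp
  -- flipping coordinate `i` changes whether `x i = x j` unless `i = j`
  have hsum : ∀ x, φ x + φ (Function.update x i (!x i)) ≤ 1 := by
    intro x
    by_cases hij : j = i
    · subst hij; simp [φ]
    · cases hx : x i <;> cases hy : x j <;> simp [φ, hij, hx, hy]
  have hflip : 𝔼 x, φ (Function.update x i (!x i)) = 𝔼 x, φ x :=
    Fintype.expect_equiv flip.toPerm _ _ fun _ => rfl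
  have : 𝔼 x, (φ x + φ (Function.update x i (!x i))) ≤ 𝔼 _x : Fin n → Bool, (1 : ℝ) :=
    expect_le_expect fun x _ => hsum x
  rw [expect_add_distrib, hflip, Fintype.expect_const] at this
  linarith

lemma expect_ne_comp_neg_le (S : Finset (Fin n)) (g : (Fin n → Bool) → Fin n)
    (y : Fin n → Bool) (hy : ∀ i ∈ S, ∀ j ∈ S, y i = y j) :
    𝔼 x, (if y (g x) = y (g (neg n x)) then 0 else 1 : ℝ) ≤
      2 * Pr n (fun x => g x ∉ S) := by
  have hpt : ∀ x, (if y (g x) = y (g (neg n x)) then 0 else 1 : ℝ) ≤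
      (if g x ∉ S then 1 else 0) + (if g (neg n x) ∉ S then 1 else 0) := by
    intro x
    by_cases h1 : g x ∈ S
    · by_cases h2 : g (neg n x) ∈ S
      · simp [hy _ h1 _ h2, h1, h2]
      · split_ifs <;> simp_all
    · split_ifs <;> simp_all
  calc _ ≤ 𝔼 x, ((if g x ∉ S then 1 else 0) + (if g (neg n x) ∉ S then 1 else 0) : ℝ) :=
        expect_le_expect fun x _ => hpt x
    _ = 2 * Pr n (fun x => g x ∉ S) := by
        rw [expect_add_distrib, expect_comp_neg (fun x => if g x ∉ S then (1:ℝ) else 0),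
          Pr_eq_expect, two_mul]

theorem Ex2_chi_mul_chi_le (S : Finset (Fin n)) (f g : (Fin n → Bool) → Fin n) :
    Ex2 n (fun x y => chi (x (f y)) * chi (y (g x))) ≤
      1 / 2 - (1 / 2 - 2 * Pr n (fun x => g x ∉ S)) *
        Pr n (fun y => ∀ i ∈ S, ∀ j ∈ S, y i = y j) := by
  set δ := Pr n (fun x => g x ∉ S)
  set C : (Fin n → Bool) → Prop := fun y => ∀ i ∈ S, ∀ j ∈ S, y i = y j
  have hsym := expect_symmetrize (fun x y => chi (x (f y))) (fun x y => chi (y (g x)))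
    (fun x y => chi_not _) (fun x y => chi_not _)
  have hy : ∀ y, 𝔼 x, (chi (x (f y)) - chi (x (f (neg n y)))) *
      (chi (y (g x)) - chi (y (g (neg n x)))) ≤ if C y then 8 * δ else 2 := by
    intro y
    split_ifs with hC
    · calc _ ≤ 𝔼 x, 4 * (if y (g x) = y (g (neg n x)) then 0 else 1 : ℝ) :=
            expect_le_expect fun x _ => by rw [mul_comm]; exact chi_sub_mul_chi_sub_le ..
        _ ≤ 4 * (2 * δ) := by
            rw [← mul_expect]; gcongr; exact expect_ne_comp_neg_le S g y hC
        _ = 8 * δ := by ring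
    · calc _ ≤ 𝔼 x, 4 * (if x (f y) = x (f (neg n y)) then 0 else 1 : ℝ) :=
            expect_le_expect fun x _ => chi_sub_mul_chi_sub_le ..
        _ ≤ 4 * (1 / 2) := by
            rw [← mul_expect]; gcongr; exact expect_coord_ne_le_half _ _
        _ = 2 := by norm_num
  have havg : 𝔼 y, (if C y then 8 * δ else 2 : ℝ) = 2 - (2 - 8 * δ) * Pr n C :=
    calc 𝔼 y, (if C y then 8 * δ else 2 : ℝ)
        = 𝔼 y, (2 - (2 - 8 * δ) * if C y then 1 else 0 : ℝ) :=
          expect_congr rfl fun y _ => by split_ifs <;> ring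
      _ = 2 - (2 - 8 * δ) * Pr n C := by
          rw [expect_sub_distrib, Fintype.expect_const, ← mul_expect, Pr_eq_expect]
  have hle : 4 * 𝔼 x : Fin n → Bool, 𝔼 y : Fin n → Bool, chi (x (f y)) * chi (y (g x)) ≤
      2 - (2 - 8 * δ) * Pr n C := by
    rw [← hsym, expect_comm, ← havg]
    exact expect_le_expect fun y _ => hy y
  rw [Ex2_eq_expect]
  linarith

end

-- The index `g x` in `{1,…,n}` is `(g x).val + 1`.
theorem stmt10_general (n : ℕ) (k : ℕ) (hk : 2 ≤ k) (ε : ℝ) (hε1 : ε < 1 / 4)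
    (f g : (Fin n → Bool) → Fin n)
    (hg : Pr n (fun x => k ≤ (g x).val + 1) ≤ ε) :
    Ex2 n (fun x y => chi (x (f y)) * chi (y (g x))) ≤
      1 / 2 - (1 - 4 * ε) * (2 : ℝ) ^ (-(k : ℤ) + 1) := by
  set S : Finset (Fin n) := {i | i.val < k - 1}
  have hgS : Pr n (fun x => g x ∉ S) ≤ ε := by
    convert hg using 4
    simp only [S, mem_filter, mem_univ, true_and, not_lt]
    omega
  have hS : S.Nonempty := ⟨⟨0, (f fun _ => true).pos⟩, by simp [S]; omega⟩
  have hcard : (#S : ℤ) ≤ k - 1 := by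
    have : #S ≤ k - 1 := by simp [S, Fin.card_filter_val_lt]
    omega
  have hpow : 2 * (2 : ℝ) ^ (-(k : ℤ) + 1) ≤ 2 ^ (1 - (#S : ℤ)) := by
    rw [← zpow_one_add₀ two_ne_zero]
    exact zpow_le_zpow_right₀ one_le_two (by omega)
  have hδ : 0 ≤ 1 / 2 - 2 * Pr n (fun x => g x ∉ S) := by linarith
  have hPr := zpow_one_sub_card_le_Pr_const S hS
  calc _ ≤ _ := Ex2_chi_mul_chi_le S f g
    _ ≤ 1 / 2 - (1 / 2 - 2 * ε) * (2 * (2 : ℝ) ^ (-(k : ℤ) + 1)) := by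
        gcongr ?_ - ?_ * ?_
        · linarith
        · exact hpow.trans hPr
    _ = _ := by ring

/-- if Pr[g(X) ≥ k] ≤ ε then
    E[X_{f(Y)}·Y_{g(X)}] ≤ 1/2 − (1−4ε)·2^{−k+1}.
    Here the index of `g x` in `{1,…,n}` is `(g x).val + 1`. -/
theorem stmt10 (n : ℕ) (k : ℕ) (hk : 2 ≤ k) (ε : ℝ) (hε0 : 0 < ε) (hε1 : ε < 1 / 4)
    (f g : (Fin n → Bool) → Fin n)
    (hg : Pr n (fun x => k ≤ (g x).val + 1) ≤ ε) :
    Ex2 n (fun x y => chi (x (f y)) * chi (y (g x))) ≤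
      1 / 2 - (1 - 4 * ε) * (2 : ℝ) ^ (-(k : ℤ) + 1) :=
  stmt10_general n k hk ε hε1 f g hg
end

section
/- For any f, g : {-1,1}^n → {1,...,n} and independent uniform X, Y on {-1,1}^n, E[X_{f(Y)} · Y_{g(X)}] ≤ 1/2; equivalently, Pr[X_{f(Y)} = Y_{g(X)} = 1] ≤ 3/8. -/
open Finset Real
open scoped Classical

lemma chi_not' {n : ℕ} (x : Fin n → Bool) (i : Fin n) : chi (neg n x i) = - chi (x i) := by
  cases h : x i <;> simp [neg, chi, h]

lemma chi_sq (b : Bool) : chi b * chi b = 1 := by cases b <;> norm_num [chi]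

lemma neg_neg' (n : ℕ) (x : Fin n → Bool) : neg n (neg n x) = x := by
  funext i; simp [neg]

lemma sum_neg_reindex (n : ℕ) (h : (Fin n → Bool) → ℝ) :
    ∑ x : Fin n → Bool, h (neg n x) = ∑ x : Fin n → Bool, h x := by
  apply Fintype.sum_bijective (neg n)
  · exact Function.Involutive.bijective (neg_neg' n)
  · intro x; rfl

lemma sum_chi (n : ℕ) (i : Fin n) : ∑ x : Fin n → Bool, chi (x i) = 0 := by
  apply Finset.sum_ninvolution (fun x => Function.update x i (!(x i)))
  · intro x; cases h : x i <;> simp [Function.update_self, chi, h]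
  · intro x _ h; have : Function.update x i (!(x i)) i = x i := by rw [h]
    simp [Function.update_self] at this
  · intro x; exact Finset.mem_univ _
  · intro x; funext j
    by_cases hj : j = i
    · subst hj; simp [Function.update_self]
    · simp [Function.update_of_ne hj]

lemma sum_chi_mul_nonneg (n : ℕ) (i j : Fin n) :
    0 ≤ ∑ x : Fin n → Bool, chi (x i) * chi (x j) := by
  by_cases hij : i = j
  · subst hij
    have : ∀ x : Fin n → Bool, chi (x i) * chi (x i) = 1 := fun x => chi_sq _
    rw [Finset.sum_congr rfl (fun x _ => this x)]
    simp [Finset.sum_const]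
  · have h0 : ∑ x : Fin n → Bool, chi (x i) * chi (x j) = 0 := by
      apply Finset.sum_ninvolution (fun x => Function.update x i (!(x i)))
      · intro x
        rw [Function.update_self, Function.update_of_ne (fun h => hij h.symm)]
        have : chi (!(x i)) = - chi (x i) := by cases h : x i <;> simp [chi, h]
        rw [this]; ring
      · intro x _ h; have : Function.update x i (!(x i)) i = x i := by rw [h]
        simp [Function.update_self] at this
      · intro x; exact Finset.mem_univ _
      · intro x; funext k
        by_cases hk : k = i
        · subst hk; simp [Function.update_self]
        · simp [Function.update_of_ne hk]
    rw [h0]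

lemma card_cube (n : ℕ) : ∑ _x : Fin n → Bool, (1:ℝ) = 2 ^ n := by
  simp [Finset.sum_const, Finset.card_univ]

lemma key (n : ℕ) (f g : (Fin n → Bool) → Fin n) :
    ∑ x : Fin n → Bool, ∑ y : Fin n → Bool, chi (x (f y)) * chi (y (g x))
      ≤ 2 ^ (2 * n) / 2 := by
  set S := ∑ x : Fin n → Bool, ∑ y : Fin n → Bool, chi (x (f y)) * chi (y (g x)) with hS
  -- flip in y, for a fixed x and arbitrary coordinate j
  have flipY : ∀ (x : Fin n → Bool) (j : Fin n),
      ∑ y : Fin n → Bool, chi (x (f (neg n y))) * chi (y j)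
        = - ∑ y : Fin n → Bool, chi (x (f y)) * chi (y j) := by
    intro x j
    have h1 := sum_neg_reindex n (fun z => chi (x (f z)) * chi (neg n z j))
    calc ∑ y : Fin n → Bool, chi (x (f (neg n y))) * chi (y j)
        = ∑ y : Fin n → Bool, chi (x (f (neg n y))) * chi (neg n (neg n y) j) := by
          apply Finset.sum_congr rfl; intro y _; rw [neg_neg']
      _ = ∑ z : Fin n → Bool, chi (x (f z)) * chi (neg n z j) := h1
      _ = ∑ z : Fin n → Bool, -(chi (x (f z)) * chi (z j)) := by
          apply Finset.sum_congr rfl; intro z _; rw [chi_not']; ring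
      _ = - ∑ z : Fin n → Bool, chi (x (f z)) * chi (z j) := by
          rw [Finset.sum_neg_distrib]
  have E1 : ∑ x : Fin n → Bool, ∑ y : Fin n → Bool,
      chi (x (f (neg n y))) * chi (y (g x)) = -S := by
    rw [hS, ← Finset.sum_neg_distrib]
    exact Finset.sum_congr rfl (fun x _ => flipY x (g x))
  have E2 : ∑ x : Fin n → Bool, ∑ y : Fin n → Bool,
      chi (x (f y)) * chi (y (g (neg n x))) = -S := by
    have h1 := sum_neg_reindex n
      (fun z => ∑ y : Fin n → Bool, chi (neg n z (f y)) * chi (y (g z)))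
    calc ∑ x : Fin n → Bool, ∑ y : Fin n → Bool, chi (x (f y)) * chi (y (g (neg n x)))
        = ∑ x : Fin n → Bool, ∑ y : Fin n → Bool,
            chi (neg n (neg n x) (f y)) * chi (y (g (neg n x))) := by
          apply Finset.sum_congr rfl; intro x _; rw [neg_neg']
      _ = ∑ x : Fin n → Bool, ∑ y : Fin n → Bool, chi (neg n x (f y)) * chi (y (g x)) := h1
      _ = ∑ x : Fin n → Bool, ∑ y : Fin n → Bool, -(chi (x (f y)) * chi (y (g x))) := by
          apply Finset.sum_congr rfl; intro x _
          apply Finset.sum_congr rfl; intro y _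
          rw [chi_not']; ring
      _ = -S := by rw [hS]; simp [Finset.sum_neg_distrib]
  have E3 : ∑ x : Fin n → Bool, ∑ y : Fin n → Bool,
      chi (x (f (neg n y))) * chi (y (g (neg n x))) = S := by
    have h2 : ∑ x : Fin n → Bool, ∑ y : Fin n → Bool,
        chi (x (f (neg n y))) * chi (y (g (neg n x)))
          = - ∑ x : Fin n → Bool, ∑ y : Fin n → Bool,
              chi (x (f y)) * chi (y (g (neg n x))) := by
      rw [← Finset.sum_neg_distrib]
      exact Finset.sum_congr rfl (fun x _ => flipY x (g (neg n x)))
    rw [h2, E2, neg_neg]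
  have hcard : (2:ℝ)^(2*n) = 2^n * 2^n := by rw [two_mul, pow_add]
  have hsum2 : ∑ _x : Fin n → Bool, ∑ _y : Fin n → Bool, (2:ℝ) = 2 * 2^(2*n) := by
    simp [Finset.sum_const, Finset.card_univ, hcard]; ring
  set dA := fun (x y : Fin n → Bool) => chi (x (f y)) - chi (x (f (neg n y))) with hdA
  set dB := fun (x y : Fin n → Bool) => chi (y (g x)) - chi (y (g (neg n x))) with hdB
  have hT : ∑ x : Fin n → Bool, ∑ y : Fin n → Bool, dA x y * dB x y = 4 * S := by
    have expand : ∀ x y : Fin n → Bool, dA x y * dB x y =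
        chi (x (f y)) * chi (y (g x)) - chi (x (f y)) * chi (y (g (neg n x)))
        - chi (x (f (neg n y))) * chi (y (g x))
        + chi (x (f (neg n y))) * chi (y (g (neg n x))) := by
      intro x y; simp only [hdA, hdB]; ring
    calc ∑ x : Fin n → Bool, ∑ y : Fin n → Bool, dA x y * dB x y
        = ∑ x : Fin n → Bool, ∑ y : Fin n → Bool,
            (chi (x (f y)) * chi (y (g x)) - chi (x (f y)) * chi (y (g (neg n x)))
            - chi (x (f (neg n y))) * chi (y (g x))
            + chi (x (f (neg n y))) * chi (y (g (neg n x)))) := by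
          exact Finset.sum_congr rfl (fun x _ => Finset.sum_congr rfl (fun y _ => expand x y))
      _ = (∑ x : Fin n → Bool, ∑ y : Fin n → Bool, chi (x (f y)) * chi (y (g x)))
          - (∑ x : Fin n → Bool, ∑ y : Fin n → Bool, chi (x (f y)) * chi (y (g (neg n x))))
          - (∑ x : Fin n → Bool, ∑ y : Fin n → Bool, chi (x (f (neg n y))) * chi (y (g x)))
          + (∑ x : Fin n → Bool, ∑ y : Fin n → Bool,
              chi (x (f (neg n y))) * chi (y (g (neg n x)))) := by
          simp [Finset.sum_add_distrib, Finset.sum_sub_distrib]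
      _ = S - (-S) - (-S) + S := by rw [E1, E2, E3]
      _ = 4 * S := by ring
  have hAcorr : 0 ≤ ∑ x : Fin n → Bool, ∑ y : Fin n → Bool,
      chi (x (f y)) * chi (x (f (neg n y))) := by
    rw [Finset.sum_comm]
    exact Finset.sum_nonneg (fun y _ => sum_chi_mul_nonneg n (f y) (f (neg n y)))
  have hBcorr : 0 ≤ ∑ x : Fin n → Bool, ∑ y : Fin n → Bool,
      chi (y (g x)) * chi (y (g (neg n x))) := by
    exact Finset.sum_nonneg (fun x _ => sum_chi_mul_nonneg n (g x) (g (neg n x)))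
  have hA2 : ∑ x : Fin n → Bool, ∑ y : Fin n → Bool, dA x y ^ 2 ≤ 2 * 2^(2*n) := by
    have e : ∀ x y : Fin n → Bool, dA x y ^ 2
        = 2 - 2 * (chi (x (f y)) * chi (x (f (neg n y)))) := by
      intro x y
      have h1 := chi_sq (x (f y)); have h2 := chi_sq (x (f (neg n y)))
      simp only [hdA]; nlinarith [h1, h2]
    calc ∑ x : Fin n → Bool, ∑ y : Fin n → Bool, dA x y ^ 2
        = ∑ x : Fin n → Bool, ∑ y : Fin n → Bool,
            (2 - 2 * (chi (x (f y)) * chi (x (f (neg n y))))) :=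
          Finset.sum_congr rfl (fun x _ => Finset.sum_congr rfl (fun y _ => e x y))
      _ = (∑ _x : Fin n → Bool, ∑ _y : Fin n → Bool, (2:ℝ))
          - 2 * ∑ x : Fin n → Bool, ∑ y : Fin n → Bool,
              chi (x (f y)) * chi (x (f (neg n y))) := by
          simp [Finset.sum_sub_distrib, Finset.mul_sum]
      _ ≤ 2 * 2^(2*n) := by rw [hsum2]; linarith
  have hB2 : ∑ x : Fin n → Bool, ∑ y : Fin n → Bool, dB x y ^ 2 ≤ 2 * 2^(2*n) := by
    have e : ∀ x y : Fin n → Bool, dB x y ^ 2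
        = 2 - 2 * (chi (y (g x)) * chi (y (g (neg n x)))) := by
      intro x y
      have h1 := chi_sq (y (g x)); have h2 := chi_sq (y (g (neg n x)))
      simp only [hdB]; nlinarith [h1, h2]
    calc ∑ x : Fin n → Bool, ∑ y : Fin n → Bool, dB x y ^ 2
        = ∑ x : Fin n → Bool, ∑ y : Fin n → Bool,
            (2 - 2 * (chi (y (g x)) * chi (y (g (neg n x))))) :=
          Finset.sum_congr rfl (fun x _ => Finset.sum_congr rfl (fun y _ => e x y))
      _ = (∑ _x : Fin n → Bool, ∑ _y : Fin n → Bool, (2:ℝ))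
          - 2 * ∑ x : Fin n → Bool, ∑ y : Fin n → Bool,
              chi (y (g x)) * chi (y (g (neg n x))) := by
          simp [Finset.sum_sub_distrib, Finset.mul_sum]
      _ ≤ 2 * 2^(2*n) := by rw [hsum2]; linarith
  have hpt : ∀ x y : Fin n → Bool, dA x y * dB x y ≤ (dA x y ^ 2 + dB x y ^ 2) / 2 := by
    have gen : ∀ a b : ℝ, a * b ≤ (a ^ 2 + b ^ 2) / 2 := by
      intro a b; nlinarith [sq_nonneg (a - b)]
    intro x y; exact gen _ _
  have hTle : 4 * S ≤ 2 * 2^(2*n) := by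
    rw [← hT]
    calc ∑ x : Fin n → Bool, ∑ y : Fin n → Bool, dA x y * dB x y
        ≤ ∑ x : Fin n → Bool, ∑ y : Fin n → Bool, (dA x y ^ 2 + dB x y ^ 2) / 2 :=
          Finset.sum_le_sum (fun x _ => Finset.sum_le_sum (fun y _ => hpt x y))
      _ = ((∑ x : Fin n → Bool, ∑ y : Fin n → Bool, dA x y ^ 2)
          + (∑ x : Fin n → Bool, ∑ y : Fin n → Bool, dB x y ^ 2)) / 2 := by
          simp [Finset.sum_add_distrib, ← Finset.sum_div, add_div]
      _ ≤ 2 * 2^(2*n) := by linarith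
  linarith

/-- E[X_{f(Y)}·Y_{g(X)}] ≤ 1/2 and Pr[X_{f(Y)} = Y_{g(X)} = 1] ≤ 3/8. -/
theorem stmt11 (n : ℕ) (f g : (Fin n → Bool) → Fin n) :
    Ex2 n (fun x y => chi (x (f y)) * chi (y (g x))) ≤ 1 / 2 ∧
    Pr2 n (fun x y => chi (x (f y)) = 1 ∧ chi (y (g x)) = 1) ≤ 3 / 8 := by
  have hkey := key n f g
  have hpos : (0:ℝ) < 2 ^ (2 * n) := by positivity
  constructor
  · simp only [Ex2]
    rw [div_le_iff₀ hpos]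
    linarith
  · have hind : ∀ (x y : Fin n → Bool) (inst : Decidable (chi (x (f y)) = 1 ∧ chi (y (g x)) = 1)),
        (@ite ℝ (chi (x (f y)) = 1 ∧ chi (y (g x)) = 1) inst 1 0)
          = (1 + chi (x (f y)) + chi (y (g x)) + chi (x (f y)) * chi (y (g x))) / 4 := by
      intro x y inst
      have hv : ∀ b : Bool, chi b = 1 ∨ chi b = -1 := by intro b; cases b <;> simp [chi]
      by_cases h : chi (x (f y)) = 1 ∧ chi (y (g x)) = 1
      · rw [if_pos h, h.1, h.2]; norm_num
      · rw [if_neg h]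
        rcases hv (x (f y)) with h1 | h1 <;> rcases hv (y (g x)) with h2 | h2
        · exact absurd ⟨h1, h2⟩ h
        all_goals rw [h1, h2]; norm_num
    have hA0 : ∑ x : Fin n → Bool, ∑ y : Fin n → Bool, chi (x (f y)) = 0 := by
      rw [Finset.sum_comm]
      exact Finset.sum_eq_zero (fun y _ => sum_chi n (f y))
    have hB0 : ∑ x : Fin n → Bool, ∑ y : Fin n → Bool, chi (y (g x)) = 0 :=
      Finset.sum_eq_zero (fun x _ => sum_chi n (g x))
    have hone : ∑ _x : Fin n → Bool, ∑ _y : Fin n → Bool, (1:ℝ) = 2 ^ (2 * n) := by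
      simp [Finset.sum_const, Finset.card_univ, two_mul, pow_add]
    simp only [Pr2, Ex2]
    rw [div_le_iff₀ hpos]
    simp only [hind]
    have expand : ∑ x : Fin n → Bool, ∑ y : Fin n → Bool,
        (1 + chi (x (f y)) + chi (y (g x)) + chi (x (f y)) * chi (y (g x))) / 4
        = ((∑ _x : Fin n → Bool, ∑ _y : Fin n → Bool, (1:ℝ))
          + (∑ x : Fin n → Bool, ∑ y : Fin n → Bool, chi (x (f y)))
          + (∑ x : Fin n → Bool, ∑ y : Fin n → Bool, chi (y (g x)))
          + (∑ x : Fin n → Bool, ∑ y : Fin n → Bool,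
              chi (x (f y)) * chi (y (g x)))) / 4 := by
      simp [Finset.sum_add_distrib, ← Finset.sum_div, add_div]
      ring
    rw [expand, hA0, hB0, hone]
    linarith
end

section
/- Let α₁ ≥ α₂ ≥ ... ≥ α_n ≥ 0 with Σ_j α_j = 1 and Σ_{j=9}^n α_j ≥ 0.009079. Let z(α) = 2α² log(1/α) if α < α', and z(α) = α/2 if α ≥ α', where α' ∈ (0,1/2) is the unique solution of 2α² log(1/α) = α/2. Then Σ_{j=1}^n z(α_j) ≤ 0.4962357. -/
/-!
Write `z x = x / 2 - truncDeficit α' x`, where `truncDeficit α' x` is `deficit x = x / 2 + 2 x² log x`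
for `x < α'` and `0` otherwise; the claim becomes `∑ truncDeficit α' (a j) ≥ 0.0037643`, a number just
below `deficit 0.009079`. The function `deficit` is concave on `[0, e^{-3/2}]`, which contains `α'`,
vanishes at `α'`, and lies above the parabola `x (1/4 - κ x)`, `κ = 6 log 2 - 2`; in particular
`κ α' ≥ 1/4`. Let `T` be the mass of the tail `j ≥ 9` and `s = a 9`.

If `T ≤ 0.09`, every tail entry is at most `T`, and as `x log x` is decreasing the tail alone
contributes at least `deficit T ≥ min (deficit 0.009079) (deficit 0.09)`.

If `T ≥ 0.09`, the chord of `deficit` from `s` to `α'` gives `truncDeficit α' x ≥ s (1/4 - κ x)` for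
the eight head entries `x ≥ s`, and the parabola gives `truncDeficit α' x ≥ x (1/4 - κ s)` for the
tail entries `x ≤ s`. Summing, the total is at least `T / 4 - (κ - 2) s ≥ T / 4 - (κ - 2) (1 - T) / 8`.
-/

open Finset Real
open scoped Classical

lemma ConcaveOn.affine_le_of_mem_Icc {D : Set ℝ} {f : ℝ → ℝ} (hf : ConcaveOn ℝ D f)
    {p q x a b : ℝ} (hp : p ∈ D) (hq : q ∈ D) (hx : x ∈ Set.Icc p q)
    (hfp : a + b * p ≤ f p) (hfq : a + b * q ≤ f q) : a + b * x ≤ f x := by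
  have hg : ConcaveOn ℝ D (fun y => f y - b * y) :=
    hf.sub ((LinearMap.mul ℝ ℝ b).convexOn hf.1)
  have := (le_min (by linarith) (by linarith) : a ≤ min (f p - b * p) (f q - b * q)).trans
    (hg.min_le_of_mem_Icc hp hq hx)
  linarith

lemma tangent_le_mul_log {p x : ℝ} (hp : 0 < p) (hx : 0 ≤ x) :
    x * (log p + 1) - p ≤ x * log x := by
  rcases hx.eq_or_lt with rfl | hx
  · simpa using hp.le
  have h := one_sub_inv_le_log_of_pos (div_pos hx hp)
  rw [log_div hx.ne' hp.ne', inv_div] at h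
  have := mul_le_mul_of_nonneg_left h hx.le
  rw [mul_sub, mul_one, mul_div_cancel₀ _ hx.ne'] at this
  linarith

lemma log_two_gt_two_thirds : 2 / 3 < log 2 := by
  linarith [log_two_gt_d9]

lemma one_div_eight_le_exp : (1 / 8 : ℝ) ≤ exp (-3 / 2) := by
  rw [← log_le_iff_le_exp (by norm_num), show (1 / 8 : ℝ) = (2 ^ 3)⁻¹ by norm_num, log_inv,
    log_pow]
  push_cast
  linarith [log_two_gt_two_thirds]

/-- The tangent line of `x log x` at `1 / 8`. -/
lemma quarter_sub_mul_le_half_add_mul_log {x : ℝ} (hx : 0 ≤ x) :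
    1 / 4 - (6 * log 2 - 2) * x ≤ 1 / 2 + 2 * (x * log x) := by
  have h := tangent_le_mul_log (p := 1 / 8) (by norm_num) hx
  rw [show (1 / 8 : ℝ) = (2 ^ 3)⁻¹ by norm_num, log_inv, log_pow] at h
  push_cast at h
  linarith

noncomputable def deficit (x : ℝ) : ℝ := x / 2 + 2 * x ^ 2 * log x

lemma deficit_eq_mul (x : ℝ) : deficit x = x * (1 / 2 + 2 * (x * log x)) := by
  unfold deficit; ring

lemma mul_quarter_sub_le_deficit {x : ℝ} (hx : 0 ≤ x) :
    x * (1 / 4 - (6 * log 2 - 2) * x) ≤ deficit x := by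
  rw [deficit_eq_mul]
  exact mul_le_mul_of_nonneg_left (quarter_sub_mul_le_half_add_mul_log hx) hx

lemma hasDerivAt_deficit {x : ℝ} (hx : x ≠ 0) :
    HasDerivAt deficit (1 / 2 + 4 * (x * log x) + 2 * x) x := by
  have h := ((hasDerivAt_id' x).div_const 2).add
    (((hasDerivAt_id' x).const_mul 2).mul (hasDerivAt_mul_log hx))
  refine (h.congr_deriv (by ring)).congr_of_eventuallyEq (.of_forall fun y => ?_)
  simp only [Pi.add_apply, Pi.mul_apply, deficit]
  ring

lemma concaveOn_deficit : ConcaveOn ℝ (Set.Icc 0 (exp (-3 / 2))) deficit := by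
  have hcont : Continuous deficit := by
    simp_rw [funext deficit_eq_mul]; fun_prop
  refine concaveOn_of_hasDerivWithinAt2_nonpos (convex_Icc _ _) hcont.continuousOn
    (f' := fun x => 1 / 2 + 4 * (x * log x) + 2 * x) (f'' := fun x => 4 * log x + 6)
    (fun x hx => ?_) (fun x hx => ?_) (fun x hx => ?_)
  all_goals rw [interior_Icc] at hx
  · exact (hasDerivAt_deficit hx.1.ne').hasDerivWithinAt
  · have h := (((hasDerivAt_mul_log hx.1.ne').const_mul 4).const_add (1 / 2)).add
      ((hasDerivAt_id' x).const_mul 2)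
    exact (h.congr_deriv (by ring)).hasDerivWithinAt
  · have := (log_lt_log_iff hx.1 (exp_pos _)).2 hx.2
    rw [log_exp] at this
    linarith

lemma le_deficit_of_mem_Icc {T : ℝ} (hT : T ∈ Set.Icc (0.009079 : ℝ) 0.09) :
    (0.0037643 : ℝ) ≤ deficit T := by
  have hleft : (0.0037643 : ℝ) ≤ deficit 0.009079 := by
    have he4 : (54.598 : ℝ) ≤ exp 4 := by
      rw [show (4 : ℝ) = (4 : ℕ) * 1 by norm_num, exp_nat_mul]
      nlinarith [pow_le_pow_left₀ (by norm_num) exp_one_gt_d9.le 4]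
    -- `0.009079 · 2e⁴ ≈ 0.9914` is so close to `1` that `log y ≥ 1 - 1/y` is sharp enough.
    have hy : (0.99139 : ℝ) ≤ 0.009079 * (2 * exp 4) := by linarith
    have hlog := one_sub_inv_le_log_of_pos (by linarith : (0 : ℝ) < 0.009079 * (2 * exp 4))
    rw [log_mul (by norm_num) (by positivity), log_mul (by norm_num) (by positivity), log_exp]
      at hlog
    have hinv : (0.009079 * (2 * exp 4))⁻¹ ≤ (1.0086848 : ℝ) :=
      (inv_anti₀ (by norm_num) hy).trans (by norm_num)
    unfold deficit
    linarith [log_two_lt_d9]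
  have hright : (0.0037643 : ℝ) ≤ deficit 0.09 := by
    nlinarith [mul_quarter_sub_le_deficit (x := 0.09) (by norm_num), log_two_lt_d9]
  have hD : Set.Icc (0.009079 : ℝ) 0.09 ⊆ Set.Icc 0 (exp (-3 / 2)) := fun y hy =>
    ⟨by linarith [hy.1], by linarith [hy.2, one_div_eight_le_exp]⟩
  exact (le_min hleft hright).trans <|
    concaveOn_deficit.min_le_of_mem_Icc (hD ⟨le_rfl, by norm_num⟩) (hD ⟨by norm_num, le_rfl⟩) hT

lemma mul_log_eq_neg_quarter {α : ℝ} (hα : 0 < α) (h : 2 * α ^ 2 * log (1 / α) = α / 2) :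
    α * log α = -1 / 4 := by
  rw [one_div, log_inv] at h
  exact mul_left_cancel₀ hα.ne' (by linear_combination (-1 / 2 : ℝ) * h)

lemma quarter_le_mul_of_mul_log_eq {α : ℝ} (hα : 0 ≤ α) (h : α * log α = -1 / 4) :
    1 / 4 ≤ (6 * log 2 - 2) * α := by
  linarith [quarter_sub_mul_le_half_add_mul_log hα]

lemma lt_one_div_eight_of_mul_log_eq {α : ℝ} (hα : α ∈ Set.Ioo 0 (1 / 2))
    (h : α * log α = -1 / 4) : α < 1 / 8 := by
  by_contra! h8
  have hmax := convexOn_mul_log.le_max_of_mem_Icc (x := 1 / 8) (y := 1 / 2)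
    (by norm_num) (by norm_num) ⟨h8, hα.2.le⟩
  rw [h, show (1 / 8 : ℝ) = (2 ^ 3)⁻¹ by norm_num, one_div, log_inv, log_inv, log_pow,
    le_max_iff] at hmax
  push_cast at hmax
  rcases hmax with hmax | hmax <;> linarith [log_two_gt_two_thirds]

noncomputable def truncDeficit (α x : ℝ) : ℝ := if x < α then deficit x else 0

lemma half_sub_truncDeficit (α x : ℝ) :
    x / 2 - truncDeficit α x = if x < α then 2 * x ^ 2 * log (1 / x) else x / 2 := by
  unfold truncDeficit deficit
  split_ifs
  · rw [one_div, log_inv]; ring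
  · ring

/-- For `s ≤ x < α` this is the chord of `deficit` from `s` to `α`, lowered to vanish at
`1 / (4 κ) ≤ α` instead of at `α`. -/
lemma mul_quarter_sub_le_truncDeficit {α s x : ℝ} (hα : α ∈ Set.Ioo 0 (1 / 2))
    (hlog : α * log α = -1 / 4) (hs : 0 ≤ s) (hsx : s ≤ x) :
    s * (1 / 4 - (6 * log 2 - 2) * x) ≤ truncDeficit α x := by
  have hroot := quarter_le_mul_of_mul_log_eq hα.1.le hlog
  have hκ : 0 ≤ 6 * log 2 - 2 := by linarith [log_two_gt_two_thirds]
  unfold truncDeficit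
  split_ifs with hxα
  · have hD : ∀ y, 0 ≤ y → y ≤ α → y ∈ Set.Icc 0 (exp (-3 / 2)) := fun y hy hyα =>
      ⟨hy, by linarith [one_div_eight_le_exp, lt_one_div_eight_of_mul_log_eq hα hlog]⟩
    have hzero : deficit α = 0 := by rw [deficit_eq_mul, hlog]; ring
    have := concaveOn_deficit.affine_le_of_mem_Icc (a := s / 4) (b := -(s * (6 * log 2 - 2)))
      (hD s hs (hsx.trans hxα.le)) (hD α hα.1.le le_rfl) ⟨hsx, hxα.le⟩
      (by linarith [mul_quarter_sub_le_deficit hs]) (by rw [hzero]; nlinarith)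
    linarith
  · exact mul_nonpos_of_nonneg_of_nonpos hs (by nlinarith)

lemma truncDeficit_nonneg {α x : ℝ} (hα : α ∈ Set.Ioo 0 (1 / 2))
    (hlog : α * log α = -1 / 4) (hx : 0 ≤ x) : 0 ≤ truncDeficit α x := by
  simpa using mul_quarter_sub_le_truncDeficit hα hlog le_rfl hx

lemma deficit_le_sum_truncDeficit {ι : Type*} (S : Finset ι) {a : ι → ℝ} {α T : ℝ}
    (ha : ∀ j ∈ S, 0 ≤ a j) (hT : ∑ j ∈ S, a j = T) (hTα : T < α) (hT1 : T ≤ exp (-1)) :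
    deficit T ≤ ∑ j ∈ S, truncDeficit α (a j) := by
  have hle : ∀ j ∈ S, a j ≤ T := fun j hj => hT ▸ single_le_sum ha hj
  calc deficit T = ∑ j ∈ S, a j * (1 / 2 + 2 * (T * log T)) := by
        rw [deficit_eq_mul, ← sum_mul, hT]
    _ ≤ ∑ j ∈ S, truncDeficit α (a j) := by
      refine sum_le_sum fun j hj => ?_
      rw [truncDeficit, if_pos ((hle j hj).trans_lt hTα), deficit_eq_mul]
      have := mul_log_strictAntiOn.antitoneOn ⟨ha j hj, (hle j hj).trans hT1⟩
        ⟨(ha j hj).trans (hle j hj), hT1⟩ (hle j hj)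
      exact mul_le_mul_of_nonneg_left (by linarith) (ha j hj)

lemma sum_truncDeficit_ge_of_split {ι : Type*} [Fintype ι] (p : ι → Prop) [DecidablePred p]
    {a : ι → ℝ} {α s : ℝ} (hα : α ∈ Set.Ioo 0 (1 / 2)) (hlog : α * log α = -1 / 4)
    (ha : ∀ j, 0 ≤ a j) (hsum : ∑ j, a j = 1) (hs : 0 ≤ s)
    (htail : ∀ j, p j → a j ≤ s) (hhead : ∀ j, ¬ p j → s ≤ a j) :
    (∑ j ∈ univ.filter p, a j) / 4 + s * (#(univ.filter (¬ p ·)) / 4 - (6 * log 2 - 2))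
      ≤ ∑ j, truncDeficit α (a j) := by
  set κ := 6 * log 2 - 2
  have hκ : 0 ≤ κ := by linarith [log_two_gt_two_thirds]
  have hsplit := sum_filter_add_sum_filter_not univ p a
  rw [hsum] at hsplit
  have htail' : ∑ j ∈ univ.filter p, a j * (1 / 4 - κ * s)
      ≤ ∑ j ∈ univ.filter p, truncDeficit α (a j) := by
    refine sum_le_sum fun j hj => ?_
    have hj := htail j (mem_filter.1 hj).2
    calc a j * (1 / 4 - κ * s) ≤ a j * (1 / 4 - κ * a j) :=
          mul_le_mul_of_nonneg_left (by nlinarith) (ha j)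
      _ ≤ _ := mul_quarter_sub_le_truncDeficit hα hlog (ha j) le_rfl
  have hhead' : ∑ j ∈ univ.filter (¬ p ·), s * (1 / 4 - κ * a j)
      ≤ ∑ j ∈ univ.filter (¬ p ·), truncDeficit α (a j) :=
    sum_le_sum fun j hj => mul_quarter_sub_le_truncDeficit hα hlog hs (hhead j (mem_filter.1 hj).2)
  rw [← sum_filter_add_sum_filter_not univ p]
  simp only [mul_sub, sum_sub_distrib, ← sum_mul, ← mul_sum, sum_const, nsmul_eq_mul]
    at htail' hhead'
  linear_combination htail' + hhead' + s * κ * hsplit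

lemma le_sum_truncDeficit_of_tail_le {ι : Type*} [Fintype ι] (S : Finset ι) {a : ι → ℝ}
    {α : ℝ} (hα : α ∈ Set.Ioo 0 (1 / 2)) (hlog : α * log α = -1 / 4) (ha : ∀ j, 0 ≤ a j)
    (hT : ∑ j ∈ S, a j ∈ Set.Icc (0.009079 : ℝ) 0.09) :
    (0.0037643 : ℝ) ≤ ∑ j, truncDeficit α (a j) := by
  have hTα : ∑ j ∈ S, a j < α := by
    nlinarith [hT.2, quarter_le_mul_of_mul_log_eq hα.1.le hlog,
      mul_le_mul_of_nonneg_right log_two_lt_d9.le hα.1.le]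
  have hTe : ∑ j ∈ S, a j ≤ exp (-1) := by
    linarith [hT.2, one_div_eight_le_exp, exp_le_exp.2 (by norm_num : (-3 / 2 : ℝ) ≤ -1)]
  calc (0.0037643 : ℝ) ≤ deficit (∑ j ∈ S, a j) := le_deficit_of_mem_Icc hT
    _ ≤ ∑ j ∈ S, truncDeficit α (a j) :=
      deficit_le_sum_truncDeficit S (fun j _ => ha j) rfl hTα hTe
    _ ≤ ∑ j, truncDeficit α (a j) := sum_le_sum_of_subset_of_nonneg (subset_univ S)
      fun j _ _ => truncDeficit_nonneg hα hlog (ha j)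

lemma le_sum_truncDeficit_of_le_tail {ι : Type*} [Fintype ι] (p : ι → Prop) [DecidablePred p]
    {a : ι → ℝ} {α s : ℝ} (hα : α ∈ Set.Ioo 0 (1 / 2)) (hlog : α * log α = -1 / 4)
    (ha : ∀ j, 0 ≤ a j) (hsum : ∑ j, a j = 1) (hs : 0 ≤ s)
    (htail : ∀ j, p j → a j ≤ s) (hhead : ∀ j, ¬ p j → s ≤ a j)
    (hcard : #(univ.filter (¬ p ·)) = 8) (hT : (0.09 : ℝ) ≤ ∑ j ∈ univ.filter p, a j) :
    (0.0037643 : ℝ) ≤ ∑ j, truncDeficit α (a j) := by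
  have h8s : 8 * s ≤ 1 - ∑ j ∈ univ.filter p, a j := by
    have := card_nsmul_le_sum (univ.filter (¬ p ·)) a s fun j hj => hhead j (mem_filter.1 hj).2
    rw [hcard, nsmul_eq_mul] at this
    rw [← hsum, ← sum_filter_add_sum_filter_not univ p]
    push_cast at this
    linarith
  have hsplit := sum_truncDeficit_ge_of_split p hα hlog ha hsum hs htail hhead
  rw [hcard] at hsplit
  push_cast at hsplit
  have hκ : 0 ≤ 6 * log 2 - 4 := by linarith [log_two_gt_two_thirds]
  have hκ' : 6 * log 2 - 4 ≤ 0.1588832 := by linarith [log_two_lt_d9]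
  nlinarith [mul_nonneg (sub_nonneg.2 h8s) hκ,
    mul_nonneg (by linarith : 0 ≤ 1 - ∑ j ∈ univ.filter p, a j) (sub_nonneg.2 hκ')]

/-- The index `j : Fin n` stands for `j.val + 1`, so the tail `j ≥ 9` is `8 ≤ j.val`. -/
theorem stmt14_general (n : ℕ) (a : Fin n → ℝ)
    (hmono : ∀ i j : Fin n, i ≤ j → a j ≤ a i)
    (hnonneg : ∀ j, 0 ≤ a j)
    (hsum : ∑ j, a j = 1)
    (htail : 0.009079 ≤ ∑ j ∈ Finset.univ.filter (fun j : Fin n => 8 ≤ j.val), a j)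
    (α' : ℝ) (hα'mem : α' ∈ Set.Ioo (0 : ℝ) (1 / 2))
    (hα'eq : 2 * α' ^ 2 * Real.log (1 / α') = α' / 2)
    (z : ℝ → ℝ)
    (hz : ∀ α, z α = if α < α' then 2 * α ^ 2 * Real.log (1 / α) else α / 2) :
    ∑ j, z (a j) ≤ 0.4962357 := by
  have hlog := mul_log_eq_neg_quarter hα'mem.1 hα'eq
  simp_rw [hz, ← half_sub_truncDeficit, sum_sub_distrib, ← sum_div, hsum]
  suffices (0.0037643 : ℝ) ≤ ∑ j, truncDeficit α' (a j) by linarith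
  obtain ⟨j, hj⟩ := nonempty_of_sum_ne_zero (htail.trans_lt' (by norm_num)).ne'
  have hn : 8 < n := (mem_filter.1 hj).2.trans_lt j.isLt
  rcases le_total (∑ j ∈ univ.filter (fun j : Fin n => 8 ≤ j.val), a j) 0.09 with hT | hT
  · exact le_sum_truncDeficit_of_tail_le _ hα'mem hlog hnonneg ⟨htail, hT⟩
  · have hcard : #(univ.filter fun j : Fin n => ¬ 8 ≤ j.val) = 8 := by
      simp_rw [not_le]
      rw [Fin.card_filter_val_lt]
      omega
    exact le_sum_truncDeficit_of_le_tail _ hα'mem hlog hnonneg hsum (hnonneg ⟨8, hn⟩)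
      (fun j hj => hmono ⟨8, hn⟩ j (Fin.le_def.2 hj))
      (fun j hj => hmono j ⟨8, hn⟩ (Fin.le_def.2 (not_le.1 hj).le)) hcard hT

/-- the optimization bound Σ_j z(α_j) ≤ 0.4962357. Indices are
`j : Fin n` corresponding to `j.val + 1 ∈ {1,…,n}`, so `j ≥ 9` means `8 ≤ j.val`. -/
theorem stmt14 (n : ℕ) (a : Fin n → ℝ)
    (hmono : ∀ i j : Fin n, i ≤ j → a j ≤ a i)
    (hnonneg : ∀ j, 0 ≤ a j)
    (hsum : ∑ j, a j = 1)
    (htail : 0.009079 ≤ ∑ j ∈ Finset.univ.filter (fun j : Fin n => 8 ≤ j.val), a j)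
    (α' : ℝ) (hα'mem : α' ∈ Set.Ioo (0 : ℝ) (1 / 2))
    (hα'eq : 2 * α' ^ 2 * Real.log (1 / α') = α' / 2)
    (hα'uniq : ∀ β ∈ Set.Ioo (0 : ℝ) (1 / 2),
      2 * β ^ 2 * Real.log (1 / β) = β / 2 → β = α')
    (z : ℝ → ℝ)
    (hz : ∀ α, z α = if α < α' then 2 * α ^ 2 * Real.log (1 / α) else α / 2) :
    ∑ j, z (a j) ≤ 0.4962357 :=
  stmt14_general n a hmono hnonneg hsum htail α' hα'mem hα'eq z hz
end

section
/- Fix α ∈ [0,1] with 2^n α an integer, and let z = E[X·1_A(X)] ∈ ℝ^n for A ⊆ {-1,1}^n. If A maximizes Σ_{i=1}^n (1̂_B({i}))² over all B ⊆ {-1,1}^n with Pr[B] = α, then A is a halfspace with respect to its own mean direction: there exists u ∈ ℝ such that A = {x ∈ {-1,1}^n : ⟨x, z⟩ ≥ u}. -/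
open Finset Real
open scoped Classical

/-- a maximizer of the level-one Fourier weight among sets of a fixed
size is a halfspace with respect to its own mean direction `z`. -/
theorem stmt16 (n : ℕ) (A : Finset (Fin n → Bool))
    (z : Fin n → ℝ)
    (hz : ∀ i, z i = Ex n (fun x => chi (x i) * (if x ∈ A then 1 else 0)))
    (hmax : ∀ B : Finset (Fin n → Bool), B.card = A.card →
      ∑ i : Fin n, (Ex n (fun x => chi (x i) * (if x ∈ B then 1 else 0))) ^ 2 ≤
        ∑ i : Fin n, (Ex n (fun x => chi (x i) * (if x ∈ A then 1 else 0))) ^ 2) :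
    ∃ u : ℝ, ∀ x : Fin n → Bool, x ∈ A ↔ u ≤ ∑ i, chi (x i) * z i := by
  have hEx : ∀ (i : Fin n) (B : Finset (Fin n → Bool)),
      Ex n (fun x => chi (x i) * (if x ∈ B then 1 else 0)) = (∑ x ∈ B, chi (x i)) / 2 ^ n := by
    intro i B
    unfold Ex
    congr 1
    simp only [mul_ite, mul_one, mul_zero]
    rw [Finset.sum_ite_mem, Finset.univ_inter]
  have hz' : ∀ i, z i = (∑ x ∈ A, chi (x i)) / 2 ^ n := fun i => by rw [hz i, hEx]
  -- key: any point outside A has strictly smaller inner product than any point inside A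
  have hkey : ∀ a ∈ A, ∀ y, y ∉ A →
      (∑ i, chi (y i) * z i) < ∑ i, chi (a i) * z i := by
    intro a ha y hy
    by_contra hle
    push_neg at hle
    set B : Finset (Fin n → Bool) := insert y (A.erase a) with hB
    have hyE : y ∉ A.erase a := fun h => hy (Finset.mem_of_mem_erase h)
    have hcard : B.card = A.card := by
      rw [hB, Finset.card_insert_of_notMem hyE, Finset.card_erase_of_mem ha]
      have : 0 < A.card := Finset.card_pos.mpr ⟨a, ha⟩
      omega
    have hSB : ∀ i, (∑ x ∈ B, chi (x i)) =
        (∑ x ∈ A, chi (x i)) + (chi (y i) - chi (a i)) := by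
      intro i
      rw [hB, Finset.sum_insert hyE, Finset.sum_erase_eq_sub ha]
      ring
    have hpow : (0:ℝ) < (2:ℝ) ^ n := by positivity
    have H := hmax B hcard
    simp only [hEx, div_pow, ← Finset.sum_div] at H
    have H2 : (∑ i : Fin n, (∑ x ∈ B, chi (x i)) ^ 2) ≤
        ∑ i : Fin n, (∑ x ∈ A, chi (x i)) ^ 2 := by
      have hp2 : (0:ℝ) < ((2:ℝ) ^ n) ^ 2 := by positivity
      exact (div_le_div_iff_of_pos_right hp2).mp H
    -- expand
    have hexp : (∑ i : Fin n, (∑ x ∈ B, chi (x i)) ^ 2) =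
        (∑ i : Fin n, (∑ x ∈ A, chi (x i)) ^ 2) +
        2 * (∑ i : Fin n, (∑ x ∈ A, chi (x i)) * (chi (y i) - chi (a i))) +
        ∑ i : Fin n, (chi (y i) - chi (a i)) ^ 2 := by
      have he : ∀ i : Fin n, (∑ x ∈ B, chi (x i)) ^ 2 =
          (∑ x ∈ A, chi (x i)) ^ 2 +
          2 * ((∑ x ∈ A, chi (x i)) * (chi (y i) - chi (a i))) +
          (chi (y i) - chi (a i)) ^ 2 := fun i => by rw [hSB i]; ring
      rw [Finset.sum_congr rfl (fun i _ => he i), Finset.sum_add_distrib,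
        Finset.sum_add_distrib, ← Finset.mul_sum]
    -- the cross term relates to the inner products
    have hcross : (∑ i : Fin n, (∑ x ∈ A, chi (x i)) * (chi (y i) - chi (a i))) =
        ((∑ i, chi (y i) * z i) - (∑ i, chi (a i) * z i)) * 2 ^ n := by
      simp only [hz']
      rw [← Finset.sum_sub_distrib, Finset.sum_mul]
      apply Finset.sum_congr rfl
      intro i _
      field_simp
    -- the square term is strictly positive since a ≠ y
    have hne : a ≠ y := fun h => hy (h ▸ ha)
    obtain ⟨j, hj⟩ : ∃ j, a j ≠ y j := by
      by_contra h
      push_neg at h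
      exact hne (funext h)
    have hdj : (chi (y j) - chi (a j)) ^ 2 > 0 := by
      have h0 : chi (y j) - chi (a (j : Fin n)) ≠ 0 := by
        cases h1 : a j <;> cases h2 : y j <;>
          first
          | exact absurd h2.symm (h1 ▸ hj)
          | norm_num [chi]
      positivity
    have hsq : (0:ℝ) < ∑ i : Fin n, (chi (y i) - chi (a i)) ^ 2 := by
      exact lt_of_lt_of_le hdj
        (Finset.single_le_sum (f := fun i => (chi (y i) - chi (a i)) ^ 2)
          (fun i _ => sq_nonneg _) (Finset.mem_univ j))
    have hdiff : (0:ℝ) ≤ ((∑ i, chi (y i) * z i) - (∑ i, chi (a i) * z i)) * 2 ^ n := by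
      have : (0:ℝ) ≤ (∑ i, chi (y i) * z i) - (∑ i, chi (a i) * z i) := by linarith
      positivity
    rw [hexp, hcross] at H2
    linarith
  -- conclude
  rcases A.eq_empty_or_nonempty with hA | hA
  · refine ⟨1, fun x => ?_⟩
    subst hA
    simp only [Finset.notMem_empty, false_iff, not_le]
    have : ∀ i, z i = 0 := by
      intro i; rw [hz' i]; simp
    simp [this]
  · set u := (A.image (fun x => ∑ i, chi (x i) * z i)).min'
      (hA.image _) with hu
    obtain ⟨a, ha, hav⟩ := Finset.mem_image.mp
      ((A.image (fun x => ∑ i, chi (x i) * z i)).min'_mem (hA.image _))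
    refine ⟨u, fun x => ⟨fun hx => ?_, fun hx => ?_⟩⟩
    · exact Finset.min'_le _ _ (Finset.mem_image_of_mem _ hx)
    · by_contra hxA
      have := hkey a ha x hxA
      rw [hav] at this
      linarith
end
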